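/- arXiv:2412.04744 — 2 statements merged into one kernel-verified Lean document; each statement's English description precedes it below -/
import Mathlib

section
/- The bridge density p(u;φ) = sin(φπ) / (2π(cosh(φu) + cos(φπ))) is a probability density on ℝ for every φ ∈ (0,1), i.e., it is nonnegative and integrates to 1 over ℝ. -/
open Real MeasureTheory

/-- The bridge density `p_BR(u; φ) = sin(φπ) / (2π(cosh(φu) + cos(φπ)))`. -/
noncomputable def bridgePDF (φ u : ℝ) : ℝ :=
  Real.sin (φ * π) / (2 * π * (Real.cosh (φ * u) + Real.cos (φ * π)))

/-!
`2 arctan ((eᵘ + cos θ) / sin θ)` is an antiderivative of `sin θ / (cosh u + cos θ)`, increasing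
from `π - 2θ` at `-∞` to `π` at `+∞` when `0 < θ < π`; hence that function has integral `2θ`, and
the substitution `v = φu` with `θ = φπ` gives the bridge density total mass one. Both the
derivative computation and the positivity of `cosh u + cos θ` rest on the identity
`2 eᵘ (cosh u + cos θ) = (eᵘ + cos θ)² + sin² θ`.
-/

open Filter Set Topology

theorem integral_of_hasDerivAt_of_nonneg_of_tendsto {f f' : ℝ → ℝ} {m n : ℝ}
    (hderiv : ∀ x, HasDerivAt f (f' x) x) (hf' : ∀ x, 0 ≤ f' x)
    (hbot : Tendsto f atBot (𝓝 m)) (htop : Tendsto f atTop (𝓝 n)) :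
    ∫ x, f' x = n - m := by
  have hint : ∀ t : ℝ, IntegrableOn f' (Ioc (-t) t) := fun t =>
    intervalIntegral.integrableOn_deriv_of_nonneg
      (fun x _ => (hderiv x).continuousAt.continuousWithinAt)
      (fun x _ => hderiv x) (fun x _ => hf' x)
  refine (aecover_Ioc tendsto_neg_atTop_atBot tendsto_id).integral_eq_of_tendsto_of_nonneg_ae
    _ (ae_of_all _ hf') hint ?_
  have hftc : ∀ t : ℝ, 0 ≤ t → ∫ x in Ioc (-t) t, f' x = f t - f (-t) := fun t ht => by
    rw [← intervalIntegral.integral_of_le (by linarith)]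
    exact intervalIntegral.integral_eq_sub_of_hasDerivAt (fun x _ => hderiv x)
      ((intervalIntegrable_iff_integrableOn_Ioc_of_le (by linarith)).2 (hint t))
  refine Tendsto.congr' (eventually_ge_atTop 0 |>.mono fun t ht => (hftc t ht).symm) ?_
  exact htop.sub (hbot.comp tendsto_neg_atTop_atBot)

theorem two_mul_exp_mul_cosh_add_cos (u θ : ℝ) :
    2 * exp u * (cosh u + cos θ) = (exp u + cos θ) ^ 2 + sin θ ^ 2 := by
  have hexp : exp u * exp (-u) = 1 := by rw [← exp_add, add_neg_cancel, exp_zero]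
  rw [cosh_eq]
  linear_combination hexp - sin_sq_add_cos_sq θ

theorem cosh_add_cos_pos {θ : ℝ} (hθ : sin θ ≠ 0) (u : ℝ) : 0 < cosh u + cos θ := by
  have h := two_mul_exp_mul_cosh_add_cos u θ
  have : 0 < 2 * exp u * (cosh u + cos θ) := by rw [h]; positivity
  exact pos_of_mul_pos_right this (by positivity)

theorem hasDerivAt_two_mul_arctan_exp_add_cos_div_sin {θ : ℝ} (hθ : sin θ ≠ 0) (u : ℝ) :
    HasDerivAt (fun u => 2 * arctan ((exp u + cos θ) / sin θ))
      (sin θ / (cosh u + cos θ)) u := by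
  have h := ((((hasDerivAt_exp u).add_const (cos θ)).div_const (sin θ)).arctan).const_mul 2
  refine h.congr_deriv ?_
  have hpos := cosh_add_cos_pos hθ u
  field_simp
  linear_combination two_mul_exp_mul_cosh_add_cos u θ

theorem arctan_cos_div_sin {θ : ℝ} (hθ : θ ∈ Ioo 0 π) : arctan (cos θ / sin θ) = π / 2 - θ := by
  rw [← cos_pi_div_two_sub, ← sin_pi_div_two_sub, ← tan_eq_sin_div_cos]
  exact arctan_tan (by linarith [hθ.2]) (by linarith [hθ.1])

theorem integral_sin_div_cosh_add_cos {θ : ℝ} (hθ : θ ∈ Ioo 0 π) :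
    ∫ u, sin θ / (cosh u + cos θ) = 2 * θ := by
  have hsin : 0 < sin θ := sin_pos_of_pos_of_lt_pi hθ.1 hθ.2
  have hbot : Tendsto (fun u => 2 * arctan ((exp u + cos θ) / sin θ)) atBot (𝓝 (π - 2 * θ)) := by
    have h := ((continuous_arctan.tendsto _).comp
      ((tendsto_exp_atBot.add_const (cos θ)).div_const (sin θ))).const_mul 2
    rwa [zero_add, arctan_cos_div_sin hθ, mul_sub, mul_div_cancel₀ _ two_ne_zero] at h
  have htop : Tendsto (fun u => 2 * arctan ((exp u + cos θ) / sin θ)) atTop (𝓝 π) := by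
    have harg : Tendsto (fun u => (exp u + cos θ) / sin θ) atTop atTop :=
      (tendsto_atTop_add_const_right _ (cos θ) tendsto_exp_atTop).atTop_div_const hsin
    have h := ((tendsto_arctan_atTop.mono_right nhdsWithin_le_nhds).comp harg).const_mul 2
    rwa [mul_div_cancel₀ _ two_ne_zero] at h
  rw [integral_of_hasDerivAt_of_nonneg_of_tendsto
    (hasDerivAt_two_mul_arctan_exp_add_cos_div_sin hsin.ne')
    (fun u => (div_pos hsin (cosh_add_cos_pos hsin.ne' u)).le) hbot htop]
  ring

/-- The bridge density is a probability density on ℝ for every φ ∈ (0,1):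
it is nonnegative and integrates to 1. -/
theorem bridgePDF_is_probability_density (φ : ℝ) (hφ : φ ∈ Set.Ioo (0:ℝ) 1) :
    (∀ u : ℝ, 0 ≤ bridgePDF φ u) ∧ (∫ u : ℝ, bridgePDF φ u) = 1 := by
  obtain ⟨hφ0, hφ1⟩ := hφ
  have hθ : φ * π ∈ Ioo 0 π := ⟨mul_pos hφ0 pi_pos, mul_lt_of_lt_one_left pi_pos hφ1⟩
  have hsin : 0 < sin (φ * π) := sin_pos_of_pos_of_lt_pi hθ.1 hθ.2
  have hdensity :
      ∀ u, bridgePDF φ u = (2 * π)⁻¹ * (sin (φ * π) / (cosh (φ * u) + cos (φ * π))) := by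
    intro u
    rw [bridgePDF]
    field_simp
  refine ⟨fun u => ?_, ?_⟩
  · rw [hdensity]
    have := cosh_add_cos_pos hsin.ne' (φ * u)
    positivity
  · simp_rw [hdensity]
    rw [integral_const_mul,
      Measure.integral_comp_mul_left (fun v => sin (φ * π) / (cosh v + cos (φ * π))),
      integral_sin_div_cosh_add_cos hθ, abs_of_pos (inv_pos.2 hφ0), smul_eq_mul]
    field_simp
end

section
/- The low-rank kernel R̃(s,s') = r(s)ᵀ R_qq^{-1} r(s') + 1(s=s')·(1 − r(s)ᵀ R_qq^{-1} r(s)) satisfies R̃(s,s) = 1 for every s, and is positive semidefinite provided R is positive definite, where r(s)_k = R(s, s̃_k) and (R_qq)_{kk'} = R(s̃_k, s̃_{k'}) for knots s̃_1,…,s̃_q. -/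
open Matrix

/-!
On points `s_1,…,s_m`, the Gram matrix of `R̃` is the congruence `W R_qq⁻¹ Wᵀ` (rows `r(s_i)`)
of the positive definite matrix `R_qq⁻¹` plus the Gram matrix of the diagonal kernel
`1(s = s') d(s)`, where `d(s) = 1 − r(s)ᵀ R_qq⁻¹ r(s)`. Repeated points only duplicate rows and
columns, so a kernel whose Gram matrices are positive semidefinite on distinct points is so on all
families; this makes the diagonal part positive semidefinite once `d ≥ 0`, and `d(s) ≥ 0` is the
Schur complement of `R_qq` in the Gram matrix of `R` on the knots together with `s`.
-/

section KernelMatrix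

variable {S ι : Type*}

def kernelMatrix (K : S → S → ℝ) (pts : ι → S) : Matrix ι ι ℝ :=
  Matrix.of fun i j => K (pts i) (pts j)

@[simp]
lemma kernelMatrix_apply (K : S → S → ℝ) (pts : ι → S) (i j : ι) :
    kernelMatrix K pts i j = K (pts i) (pts j) := rfl

lemma dotProduct_mulVec_kernelMatrix [Fintype ι] (K : S → S → ℝ) (pts : ι → S) (c : ι → ℝ) :
    c ⬝ᵥ kernelMatrix K pts *ᵥ c = ∑ i, ∑ j, c i * c j * K (pts i) (pts j) := by
  simp only [dotProduct, mulVec, kernelMatrix_apply, Finset.mul_sum]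
  exact Finset.sum_congr rfl fun i _ => Finset.sum_congr rfl fun j _ => by ring

lemma isHermitian_kernelMatrix {K : S → S → ℝ} (hsymm : ∀ s s', K s s' = K s' s)
    (pts : ι → S) : (kernelMatrix K pts).IsHermitian :=
  Matrix.ext fun i j => by simp [hsymm]

lemma posDef_kernelMatrix {K : S → S → ℝ} (hsymm : ∀ s s', K s s' = K s' s)
    (hpd : ∀ (m : ℕ) (pts : Fin m → S), Function.Injective pts →
      ∀ c : Fin m → ℝ, c ≠ 0 → 0 < ∑ i, ∑ j, c i * c j * K (pts i) (pts j))
    {m : ℕ} {pts : Fin m → S} (hpts : Function.Injective pts) :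
    (kernelMatrix K pts).PosDef :=
  .of_dotProduct_mulVec_pos (isHermitian_kernelMatrix hsymm pts) fun c hc => by
    simpa [dotProduct_mulVec_kernelMatrix] using hpd m pts hpts c hc

lemma exists_injective_fin_comp_eq [Finite ι] (pts : ι → S) :
    ∃ (n : ℕ) (e : Fin n → S) (g : ι → Fin n), Function.Injective e ∧ e ∘ g = pts := by
  obtain ⟨n, e, he⟩ := (Set.finite_range pts).fin_embedding
  have hmem : ∀ i, pts i ∈ Set.range e := fun i => he ▸ Set.mem_range_self i
  choose g hg using hmem
  exact ⟨n, e, g, e.injective, funext hg⟩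

lemma posSemidef_kernelMatrix_of_injective {K : S → S → ℝ}
    (hK : ∀ (n : ℕ) (e : Fin n → S), Function.Injective e → (kernelMatrix K e).PosSemidef)
    [Finite ι] (pts : ι → S) : (kernelMatrix K pts).PosSemidef := by
  obtain ⟨n, e, g, he, rfl⟩ := exists_injective_fin_comp_eq pts
  exact (hK n e he).submatrix g

lemma posSemidef_kernelMatrix_diag [DecidableEq S] {d : S → ℝ} (hd : ∀ s, 0 ≤ d s)
    [Finite ι] (pts : ι → S) :
    (kernelMatrix (fun s s' => if s = s' then d s else 0) pts).PosSemidef := by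
  refine posSemidef_kernelMatrix_of_injective (fun n e he => ?_) pts
  have : kernelMatrix (fun s s' => if s = s' then d s else 0) e = diagonal (d ∘ e) := by
    ext i j
    simp [diagonal_apply, he.eq_iff]
  exact this ▸ PosSemidef.diagonal fun i => hd (e i)

lemma kernelMatrix_dotProduct_mulVec {κ : Type*} [Fintype κ] (A : Matrix κ κ ℝ) (φ : S → κ → ℝ)
    (pts : ι → S) :
    kernelMatrix (fun s s' => φ s ⬝ᵥ A *ᵥ φ s') pts
      = Matrix.of (fun i => φ (pts i)) * A * (Matrix.of fun i => φ (pts i))ᵀ := by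
  ext i j
  simp only [kernelMatrix_apply, mul_apply, of_apply, transpose_apply, dotProduct, mulVec,
    Finset.mul_sum, Finset.sum_mul]
  rw [Finset.sum_comm]
  exact Finset.sum_congr rfl fun k _ => Finset.sum_congr rfl fun l _ => by ring

lemma posSemidef_kernelMatrix_dotProduct_mulVec {κ : Type*} [Fintype κ] {A : Matrix κ κ ℝ}
    (hA : A.PosSemidef) (φ : S → κ → ℝ) [Fintype ι] (pts : ι → S) :
    (kernelMatrix (fun s s' => φ s ⬝ᵥ A *ᵥ φ s') pts).PosSemidef := by
  rw [kernelMatrix_dotProduct_mulVec]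
  simpa [conjTranspose_eq_transpose_of_trivial] using
    hA.mul_mul_conjTranspose_same (Matrix.of fun i => φ (pts i))

lemma dotProduct_inv_mulVec_le {K : S → S → ℝ} (hsymm : ∀ s s', K s s' = K s' s)
    {κ : Type*} [Fintype κ] [DecidableEq κ] {knots : κ → S}
    (hA : (kernelMatrix K knots).PosDef) (s : S)
    (hs : (kernelMatrix K (Sum.elim knots fun _ : Unit => s)).PosSemidef) :
    (fun k => K s (knots k)) ⬝ᵥ (kernelMatrix K knots)⁻¹ *ᵥ (fun k => K s (knots k)) ≤ K s s := by
  set r : κ → ℝ := fun k => K s (knots k)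
  have hblocks : kernelMatrix K (Sum.elim knots fun _ : Unit => s)
      = fromBlocks (kernelMatrix K knots) (replicateCol Unit r) (replicateCol Unit r)ᴴ
          (Matrix.of fun _ _ => K s s) := by
    ext (i | i) (j | j) <;> simp [r, hsymm]
  have : Invertible (kernelMatrix K knots) := hA.isUnit.invertible
  have hschur := (PosDef.fromBlocks₁₁ _ _ hA).mp (hblocks ▸ hs)
  have hentry := hschur.diag_nonneg (i := ())
  simp only [Matrix.sub_apply, of_apply, mul_apply, conjTranspose_apply, replicateCol_apply,
    star_trivial, Finset.sum_mul] at hentry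
  have hquad : r ⬝ᵥ (kernelMatrix K knots)⁻¹ *ᵥ r
      = ∑ j, ∑ i, r i * (kernelMatrix K knots)⁻¹ i j * r j := by
    simp only [dotProduct, mulVec, Finset.mul_sum]
    rw [Finset.sum_comm]
    exact Finset.sum_congr rfl fun j _ => Finset.sum_congr rfl fun i _ => by ring
  linarith

end KernelMatrix

theorem lowrank_kernel_unit_diag_posSemidef_general
    {S : Type*} [DecidableEq S] (q : ℕ)
    (R : S → S → ℝ)
    (hdiag : ∀ s, R s s = 1)
    (hsymm : ∀ s s', R s s' = R s' s)
    -- positive definiteness of the kernel R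
    (hpd : ∀ (m : ℕ) (pts : Fin m → S), Function.Injective pts →
      ∀ c : Fin m → ℝ, c ≠ 0 →
        0 < ∑ i, ∑ j, c i * c j * R (pts i) (pts j))
    (knots : Fin q → S) (hknots : Function.Injective knots)
    (Rqq : Matrix (Fin q) (Fin q) ℝ) (hRqq : Rqq = fun k k' => R (knots k) (knots k'))
    (r : S → Fin q → ℝ) (hr : r = fun s k => R s (knots k))
    (Rtil : S → S → ℝ)
    (hRtil : Rtil = fun s s' =>
      r s ⬝ᵥ Rqq⁻¹.mulVec (r s')
        + (if s = s' then 1 - r s ⬝ᵥ Rqq⁻¹.mulVec (r s) else 0)) :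
    (∀ s, Rtil s s = 1) ∧
      (∀ (m : ℕ) (pts : Fin m → S) (c : Fin m → ℝ),
        0 ≤ ∑ i, ∑ j, c i * c j * Rtil (pts i) (pts j)) := by
  replace hRqq : Rqq = kernelMatrix R knots := hRqq
  have hRqq_pd : Rqq.PosDef := hRqq ▸ posDef_kernelMatrix hsymm hpd hknots
  have hR_psd {ι : Type} [Finite ι] (pts : ι → S) : (kernelMatrix R pts).PosSemidef :=
    posSemidef_kernelMatrix_of_injective
      (fun _ _ he => (posDef_kernelMatrix hsymm hpd he).posSemidef) pts
  have hd (s : S) : 0 ≤ 1 - r s ⬝ᵥ Rqq⁻¹ *ᵥ r s := by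
    have := dotProduct_inv_mulVec_le hsymm (hRqq ▸ hRqq_pd) s (hR_psd _)
    rw [hr, hRqq]
    linarith [hdiag s]
  refine ⟨fun s => by simp [hRtil], fun m pts c => ?_⟩
  have hRtil_psd : (kernelMatrix Rtil pts).PosSemidef := by
    subst hRtil
    exact (posSemidef_kernelMatrix_dotProduct_mulVec hRqq_pd.inv.posSemidef r pts).add
      (posSemidef_kernelMatrix_diag hd pts)
  simpa [dotProduct_mulVec_kernelMatrix] using hRtil_psd.dotProduct_mulVec_nonneg c

/-- The low-rank kernel
`R̃(s,s') = r(s)ᵀ R_qq⁻¹ r(s') + 1(s=s')(1 − r(s)ᵀ R_qq⁻¹ r(s))` built from a positive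
definite correlation kernel `R` with unit diagonal and knots `s̃_1,…,s̃_q` satisfies
`R̃(s,s) = 1` for every `s`, and is positive semidefinite. -/
theorem lowrank_kernel_unit_diag_posSemidef
    {S : Type*} [DecidableEq S] (q : ℕ)
    (R : S → S → ℝ)
    (hrange : ∀ s s', R s s' ∈ Set.Icc (-1 : ℝ) 1)
    (hdiag : ∀ s, R s s = 1)
    (hsymm : ∀ s s', R s s' = R s' s)
    -- positive definiteness of the kernel R
    (hpd : ∀ (m : ℕ) (pts : Fin m → S), Function.Injective pts →
      ∀ c : Fin m → ℝ, c ≠ 0 →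
        0 < ∑ i, ∑ j, c i * c j * R (pts i) (pts j))
    (knots : Fin q → S) (hknots : Function.Injective knots)
    (Rqq : Matrix (Fin q) (Fin q) ℝ) (hRqq : Rqq = fun k k' => R (knots k) (knots k'))
    (r : S → Fin q → ℝ) (hr : r = fun s k => R s (knots k))
    (Rtil : S → S → ℝ)
    (hRtil : Rtil = fun s s' =>
      r s ⬝ᵥ Rqq⁻¹.mulVec (r s')
        + (if s = s' then 1 - r s ⬝ᵥ Rqq⁻¹.mulVec (r s) else 0)) :
    (∀ s, Rtil s s = 1) ∧
      (∀ (m : ℕ) (pts : Fin m → S) (c : Fin m → ℝ),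
        0 ≤ ∑ i, ∑ j, c i * c j * Rtil (pts i) (pts j)) :=
  lowrank_kernel_unit_diag_posSemidef_general q R hdiag hsymm hpd knots hknots Rqq hRqq r hr Rtil
    hRtil
end
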